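/- Let E be a finite directed graph. Then the talented monoid T_E is paradoxical if and only if E has a cycle with an exit. -/

import Mathlib

/-- A directed graph: a set of vertices `V`, a set of edges `Ed`,
and source and range maps. -/
structure DGraph (V : Type) (Ed : Type) where
  s : Ed → V
  r : Ed → V

namespace DGraph

variable {V Ed : Type} (G : DGraph V Ed)

/-- A sink is a vertex emitting no edges. -/
def IsSink (v : V) : Prop := ∀ e : Ed, G.s e ≠ v

/-- A source is a vertex receiving no edges. -/
def IsSource (v : V) : Prop := ∀ e : Ed, G.r e ≠ v

/-- A graph is row-finite if every vertex emits finitely many edges. -/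
def RowFinite : Prop := ∀ v : V, {e : Ed | G.s e = v}.Finite

theorem rowFinite_of_finite [Finite Ed] : G.RowFinite := fun _ => Set.toFinite _

/-- There is an edge from `u` to `w`. -/
def Step (u w : V) : Prop := ∃ e : Ed, G.s e = u ∧ G.r e = w

/-- `u` flows to `w`: `u = w` or there is a path from `u` to `w`. -/
def FlowsTo (u w : V) : Prop := Relation.ReflTransGen G.Step u w

/-- Strongly connected graph. -/
def StronglyConnected : Prop := ∀ u w : V, G.FlowsTo u w

/-- A (finite) path of length `≥ 1`: a nonempty list of consecutive edges. -/
structure GPath (G : DGraph V Ed) where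
  edges : List Ed
  ne : edges ≠ []
  chain : edges.Chain' (fun e f => G.r e = G.s f)

namespace GPath

variable {G}

/-- The source of a path. -/
def src (p : G.GPath) : V := G.s (p.edges.head p.ne)

/-- The range of a path. -/
def tgt (p : G.GPath) : V := G.r (p.edges.getLast p.ne)

/-- The length of a path. -/
def length (p : G.GPath) : ℕ := p.edges.length

/-- The set of vertices of a path (the sources of its edges). -/
def vset (p : G.GPath) : Set V := {v | ∃ e ∈ p.edges, G.s e = v}

/-- A cycle: a closed path with pairwise distinct edges. -/
def IsCycle (p : G.GPath) : Prop := p.src = p.tgt ∧ p.edges.Nodup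

/-- The path (cycle) has an exit: an edge `f` with `s f = s eᵢ` but `f ≠ eᵢ`. -/
def HasExit (p : G.GPath) : Prop := ∃ (f e : Ed), e ∈ p.edges ∧ G.s f = G.s e ∧ f ≠ e

/-- An extreme cycle: a cycle with an exit such that every path leaving it returns to it. -/
def IsExtremeCycle (p : G.GPath) : Prop :=
  p.IsCycle ∧ p.HasExit ∧
    ∀ lam : G.GPath, lam.src ∈ p.vset → ∃ w ∈ p.vset, G.FlowsTo lam.tgt w

end GPath

/-- Lengths of closed paths based at `v`. -/
def closedLens (v : V) : Set ℕ :=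
  {n | ∃ p : G.GPath, p.src = v ∧ p.tgt = v ∧ p.length = n}

/-- `d` is the period of `v`: the greatest common divisor of the lengths of closed
paths based at `v`. -/
def IsPeriodOf (d : ℕ) (v : V) : Prop :=
  (∀ n ∈ G.closedLens v, d ∣ n) ∧ ∀ k : ℕ, (∀ n ∈ G.closedLens v, k ∣ n) → k ∣ d

/-- A line point: no vertex that `v` flows to has a bifurcation or lies on a closed path. -/
def LinePoint (v : V) : Prop :=
  ∀ w : V, G.FlowsTo v w →
    (∀ e f : Ed, G.s e = w → G.s f = w → e = f) ∧
      ¬ ∃ p : G.GPath, p.src = w ∧ p.tgt = w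

end DGraph

section MonoidOrder

variable {M : Type} [AddCommMonoid M]

/-- The algebraic preorder on a commutative monoid: `a ≤ b` iff `a + c = b` for some `c`. -/
def MLe (a b : M) : Prop := ∃ c : M, a + c = b

/-- An order ideal of a commutative monoid. -/
structure IsOrderIdeal (I : Set M) : Prop where
  zero_mem : (0 : M) ∈ I
  add_mem : ∀ {a b : M}, a ∈ I → b ∈ I → a + b ∈ I
  mem_of_le : ∀ {a b : M}, b ∈ I → MLe a b → a ∈ I

/-- The order ideal generated by an element `x`: all `y` with `y ≤ n • x` for some `n`. -/
def orderIdealGen (x : M) : Set M := {y | ∃ n : ℕ, MLe y (n • x)}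

/-- A simple order ideal: a nonzero order ideal whose only order sub-ideals are `0` and itself. -/
def IsSimpleOrderIdeal (I : Set M) : Prop :=
  IsOrderIdeal I ∧ I ≠ {0} ∧ ∀ J : Set M, IsOrderIdeal J → J ⊆ I → J = {0} ∨ J = I

/-- The nonzero elements of `I` form a group under addition. -/
def NonzeroGroup (I : Set M) : Prop :=
  (∀ x ∈ I, ∀ y ∈ I, x ≠ 0 → y ≠ 0 → x + y ≠ 0) ∧
    ∃ e ∈ I, e ≠ (0 : M) ∧ (∀ x ∈ I, x ≠ 0 → e + x = x) ∧
      ∀ x ∈ I, x ≠ 0 → ∃ y ∈ I, y ≠ 0 ∧ x + y = e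

/-- The congruence on a commutative monoid associated to an ideal `I`:
`a ≈ b` iff `a + c = b + d` for some `c, d ∈ I`. -/
def idealCon (I : Set M) (h0 : (0 : M) ∈ I)
    (hadd : ∀ {a b : M}, a ∈ I → b ∈ I → a + b ∈ I) : AddCon M where
  r a b := ∃ c ∈ I, ∃ d ∈ I, a + c = b + d
  iseqv := by
    refine ⟨fun a => ⟨0, h0, 0, h0, rfl⟩, ?_, ?_⟩
    · rintro a b ⟨c, hc, d, hd, h⟩
      exact ⟨d, hd, c, hc, h.symm⟩
    · rintro a b c ⟨x, hx, y, hy, h1⟩ ⟨x', hx', y', hy', h2⟩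
      refine ⟨x + x', hadd hx hx', y' + y, hadd hy' hy, ?_⟩
      calc a + (x + x') = (a + x) + x' := (add_assoc _ _ _).symm
        _ = (b + y) + x' := by rw [h1]
        _ = (b + x') + y := by rw [add_right_comm]
        _ = (c + y') + y := by rw [h2]
        _ = c + (y' + y) := add_assoc _ _ _
  add' := by
    rintro a b a' b' ⟨c, hc, d, hd, h1⟩ ⟨c', hc', d', hd', h2⟩
    refine ⟨c + c', hadd hc hc', d + d', hadd hd hd', ?_⟩
    rw [add_add_add_comm, h1, h2, add_add_add_comm]

end MonoidOrder

namespace DGraph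

variable {V Ed : Type} (G : DGraph V Ed)

/-- The defining relations of the talented monoid, as a relation on the free
commutative monoid on `E⁰ × ℤ`. -/
def talRel (hrf : G.RowFinite) (a b : (V × ℤ) →₀ ℕ) : Prop :=
  ∃ (v : V) (i : ℤ), ¬ G.IsSink v ∧ a = Finsupp.single (v, i) 1 ∧
    b = ∑ e ∈ (hrf v).toFinset, Finsupp.single (G.r e, i + 1) 1

/-- The congruence generated by the defining relations of the talented monoid. -/
noncomputable def talCon (hrf : G.RowFinite) : AddCon ((V × ℤ) →₀ ℕ) := addConGen (G.talRel hrf)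

/-- The talented monoid `T_E` of a row-finite graph. -/
noncomputable def Tal (hrf : G.RowFinite) : Type := (G.talCon hrf).Quotient

noncomputable instance (hrf : G.RowFinite) : AddCommMonoid (G.Tal hrf) :=
  inferInstanceAs (AddCommMonoid (G.talCon hrf).Quotient)

/-- The generator `v(i)` of the talented monoid. -/
noncomputable def gen (hrf : G.RowFinite) (v : V) (i : ℤ) : G.Tal hrf :=
  (G.talCon hrf).mk' (Finsupp.single (v, i) 1)

/-- The action of `n : ℤ` on the talented monoid, determined by `ⁿv(i) = v(i+n)`. -/
noncomputable def shift (hrf : G.RowFinite) (n : ℤ) : G.Tal hrf →+ G.Tal hrf :=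
  AddCon.lift _
    ((AddCon.mk' _).comp
      (Finsupp.mapDomain.addMonoidHom (fun p : V × ℤ => (p.1, p.2 + n))))
    (by
      refine AddCon.addConGen_le.mpr fun a b hab => ?_
      rcases hab with ⟨v, i, hv, rfl, rfl⟩
      refine (AddCon.ker_rel _).mpr ?_
      show (G.talCon hrf).mk'
            (Finsupp.mapDomain (fun p : V × ℤ => (p.1, p.2 + n)) (Finsupp.single (v, i) 1)) =
          (G.talCon hrf).mk'
            (Finsupp.mapDomain (fun p : V × ℤ => (p.1, p.2 + n))
              (∑ e ∈ (hrf v).toFinset, Finsupp.single (G.r e, i + 1) 1))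
      rw [Finsupp.mapDomain_single, Finsupp.mapDomain_finset_sum]
      simp only [Finsupp.mapDomain_single]
      refine (AddCon.eq (G.talCon hrf)).mpr ?_
      refine AddConGen.Rel.of _ _ ⟨v, i + n, hv, rfl, ?_⟩
      exact Finset.sum_congr rfl fun e _ => by rw [add_right_comm])

end DGraph


namespace DGraph

variable {V Ed : Type} (G : DGraph V Ed)

/-- A ℤ-order ideal of the talented monoid: an order ideal closed under the ℤ-action. -/
def IsZOrderIdeal (hrf : G.RowFinite) (I : Set (G.Tal hrf)) : Prop :=
  IsOrderIdeal I ∧ ∀ (n : ℤ) (x : G.Tal hrf), x ∈ I → G.shift hrf n x ∈ I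

/-- The ℤ-order ideal generated by a set `S`. -/
def zIdealGen (hrf : G.RowFinite) (S : Set (G.Tal hrf)) : Set (G.Tal hrf) :=
  ⋂₀ {I : Set (G.Tal hrf) | G.IsZOrderIdeal hrf I ∧ S ⊆ I}

/-- A simple ℤ-order ideal: a nonzero ℤ-order ideal whose only ℤ-order sub-ideals
are `0` and itself. -/
def IsSimpleZIdeal (hrf : G.RowFinite) (I : Set (G.Tal hrf)) : Prop :=
  G.IsZOrderIdeal hrf I ∧ I ≠ {0} ∧
    ∀ J : Set (G.Tal hrf), G.IsZOrderIdeal hrf J → J ⊆ I → J = {0} ∨ J = I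

/-- The adjacency matrix of a graph: the `(u, w)` entry is the number of edges
from `u` to `w`. -/
noncomputable def adj : Matrix V V ℕ := Matrix.of fun u w => Nat.card {e : Ed // G.s e = u ∧ G.r e = w}

/-- The defining relations of the graph monoid `M_E`, as a relation on the free
commutative monoid on `E⁰`. -/
def gmRel (hrf : G.RowFinite) (a b : V →₀ ℕ) : Prop :=
  ∃ v : V, ¬ G.IsSink v ∧ a = Finsupp.single v 1 ∧
    b = ∑ e ∈ (hrf v).toFinset, Finsupp.single (G.r e) 1

/-- The graph monoid `M_E` of a row-finite graph. -/
noncomputable def GM (hrf : G.RowFinite) : Type := (addConGen (G.gmRel hrf)).Quotient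

noncomputable instance (hrf : G.RowFinite) : AddCommMonoid (G.GM hrf) :=
  inferInstanceAs (AddCommMonoid (addConGen (G.gmRel hrf)).Quotient)

/-- The smallest reflexive, transitive and additive relation on the free commutative
monoid on `E⁰` containing the defining relations of the graph monoid. -/
inductive FlowRel (hrf : G.RowFinite) : (V →₀ ℕ) → (V →₀ ℕ) → Prop
  | of {a b : V →₀ ℕ} : G.gmRel hrf a b → FlowRel hrf a b
  | refl (a : V →₀ ℕ) : FlowRel hrf a a
  | trans {a b c : V →₀ ℕ} : FlowRel hrf a b → FlowRel hrf b c → FlowRel hrf a c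
  | add_right {a b : V →₀ ℕ} (c : V →₀ ℕ) : FlowRel hrf a b → FlowRel hrf (a + c) (b + c)

/-- The quotient of the talented monoid by a ℤ-order ideal. -/
noncomputable def TalQuot (hrf : G.RowFinite) (I : Set (G.Tal hrf))
    (hI : G.IsZOrderIdeal hrf I) : Type :=
  (idealCon I hI.1.zero_mem (fun ha hb => hI.1.add_mem ha hb)).Quotient

noncomputable instance (hrf : G.RowFinite) (I : Set (G.Tal hrf))
    (hI : G.IsZOrderIdeal hrf I) : AddCommMonoid (G.TalQuot hrf I hI) :=
  inferInstanceAs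
    (AddCommMonoid (idealCon I hI.1.zero_mem (fun ha hb => hI.1.add_mem ha hb)).Quotient)

/-- The ℤ-action descends to the quotient of the talented monoid by a ℤ-order ideal. -/
noncomputable def qshift (hrf : G.RowFinite) (I : Set (G.Tal hrf))
    (hI : G.IsZOrderIdeal hrf I) (n : ℤ) : G.TalQuot hrf I hI →+ G.TalQuot hrf I hI :=
  AddCon.lift _
    ((AddCon.mk' (idealCon I hI.1.zero_mem (fun ha hb => hI.1.add_mem ha hb))).comp
      (G.shift hrf n))
    (by
      rintro a b ⟨c, hc, d, hd, h⟩
      show AddCon.ker _ _ _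
      refine (AddCon.ker_rel _).mpr ?_
      show (AddCon.mk' _) (G.shift hrf n a) = (AddCon.mk' _) (G.shift hrf n b)
      refine (AddCon.eq _).mpr ?_
      exact ⟨G.shift hrf n c, hI.2 n c hc, G.shift hrf n d, hI.2 n d hd, by
        rw [← map_add, ← map_add, h]⟩)

end DGraph

section Aux18
set_option linter.unusedSectionVars false
namespace DGraph

open Finsupp

variable {V Ed : Type} [Fintype V] [Fintype Ed] (G : DGraph V Ed)

/-- abbreviation for the canonical row-finiteness -/
noncomputable abbrev rf18 : G.RowFinite := G.rowFinite_of_finite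

/-- the quotient map as an AddMonoidHom -/
noncomputable def mkT : ((V × ℤ) →₀ ℕ) →+ G.Tal G.rf18 := (G.talCon G.rf18).mk'

lemma gen_def18 (v : V) (i : ℤ) :
    G.gen G.rf18 v i = G.mkT (Finsupp.single (v, i) 1) := rfl

lemma mkT_rel {a b : (V × ℤ) →₀ ℕ} (h : G.talRel G.rf18 a b) : G.mkT a = G.mkT b := by
  show ((a : (G.talCon G.rf18).Quotient)) = b
  exact (AddCon.eq _).2 (AddConGen.Rel.of _ _ h)

lemma nonsink_of_edge {e : Ed} : ¬ G.IsSink (G.s e) := by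
  intro h; exact h e rfl

lemma gen_eq_sum18 {v : V} (hv : ¬ G.IsSink v) (i : ℤ) :
    G.gen G.rf18 v i
      = ∑ e ∈ (G.rf18 v).toFinset, G.gen G.rf18 (G.r e) (i+1) := by
  rw [gen_def18, G.mkT_rel ⟨v, i, hv, rfl, rfl⟩, map_sum]
  rfl

lemma MLe_refl {M : Type} [AddCommMonoid M] (a : M) : MLe a a := ⟨0, add_zero a⟩

lemma MLe_trans {M : Type} [AddCommMonoid M] {a b c : M} (h1 : MLe a b) (h2 : MLe b c) :
    MLe a c := by
  obtain ⟨x, hx⟩ := h1; obtain ⟨y, hy⟩ := h2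
  exact ⟨x + y, by rw [← add_assoc, hx, hy]⟩

lemma MLe_add_right {M : Type} [AddCommMonoid M] {a b : M} (c : M) (h : MLe a b) :
    MLe (a + c) (b + c) := by
  obtain ⟨x, hx⟩ := h
  exact ⟨x, by rw [add_right_comm, hx]⟩

open Classical in
lemma gen_step_le (e : Ed) (i : ℤ) :
    MLe (G.gen G.rf18 (G.r e) (i+1)) (G.gen G.rf18 (G.s e) i) := by
  rw [G.gen_eq_sum18 G.nonsink_of_edge i]
  have he : e ∈ (G.rf18 (G.s e)).toFinset := by
    simp [Set.Finite.mem_toFinset]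
  have h2 := Finset.add_sum_erase ((G.rf18 (G.s e)).toFinset)
    (fun f => G.gen G.rf18 (G.r f) (i+1)) he
  exact ⟨_, h2⟩

lemma shift_gen (n : ℤ) (v : V) (i : ℤ) :
    G.shift G.rf18 n (G.gen G.rf18 v i) = G.gen G.rf18 v (i + n) := by
  show G.shift G.rf18 n (((Finsupp.single (v, i) 1 : (V × ℤ) →₀ ℕ) : (G.talCon G.rf18).Quotient)) = _
  rw [shift]
  erw [AddCon.lift_coe]
  show (G.talCon G.rf18).mk' (Finsupp.mapDomain (fun p : V × ℤ => (p.1, p.2 + n)) (Finsupp.single (v, i) 1)) = _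
  rw [Finsupp.mapDomain_single]
  rfl

end DGraph
end Aux18
section Aux18b
set_option linter.unusedSectionVars false
namespace DGraph
variable {V Ed : Type} [Fintype V] [Fintype Ed] (G : DGraph V Ed)

lemma cyc_fn (c : G.GPath) (hc : c.IsCycle) :
    ∃ (σ : ℕ → Ed) (k : ℕ), 1 ≤ k ∧ (∀ i, G.r (σ i) = G.s (σ (i+1))) ∧
      (∀ i, σ (i + k) = σ i) ∧ G.s (σ 0) = c.src ∧
      (∀ t (h : t < c.edges.length), σ t = c.edges[t]) ∧ k = c.edges.length := by
  have hk0 : 0 < c.edges.length := List.length_pos_iff.2 c.ne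
  refine ⟨fun i => c.edges[i % c.edges.length]'(Nat.mod_lt i hk0), c.edges.length, hk0, ?_, ?_, ?_, ?_, rfl⟩
  · intro i
    set k := c.edges.length with hkdef
    have ht : i % k < k := Nat.mod_lt i hk0
    have hmod : (i+1) % k = (i % k + 1) % k := by
      conv_lhs => rw [Nat.add_mod]
      conv_rhs => rw [Nat.add_mod]
      rw [Nat.mod_mod_of_dvd]
      exact dvd_refl _
    by_cases hcase : i % k + 1 < k
    · have h2 : (i+1) % k = i % k + 1 := by rw [hmod, Nat.mod_eq_of_lt hcase]
      have := (List.isChain_iff_getElem.1 c.chain) (i % k) (by omega)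
      show G.r c.edges[i % k] = G.s c.edges[(i+1) % k]
      simp only [h2]
      exact this
    · have hek : i % k + 1 = k := by omega
      have h2 : (i+1) % k = 0 := by rw [hmod, hek, Nat.mod_self]
      have hlast : c.edges[i % k] = c.edges.getLast c.ne := by
        rw [List.getLast_eq_getElem]
        congr 1
        omega
      show G.r c.edges[i % k] = G.s c.edges[(i+1) % k]
      simp only [h2, hlast]
      have : G.r (c.edges.getLast c.ne) = c.tgt := rfl
      rw [this, ← hc.1]
      have : c.src = G.s (c.edges.head c.ne) := rfl
      rw [this, List.head_eq_getElem_zero c.ne]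
  · intro i
    simp [Nat.add_mod_right]
  · have : (0 : ℕ) % c.edges.length = 0 := Nat.zero_mod _
    simp only [this]
    show G.s c.edges[0] = c.src
    rw [← List.head_eq_getElem_zero c.ne]
    rfl
  · intro t ht
    simp [Nat.mod_eq_of_lt ht]

lemma mle_along (σ : ℕ → Ed) (ch : ∀ i, G.r (σ i) = G.s (σ (i+1))) (m : ℕ) (i : ℤ) :
    MLe (G.gen G.rf18 (G.s (σ m)) (i + m)) (G.gen G.rf18 (G.s (σ 0)) i) := by
  induction m with
  | zero => simpa using MLe_refl _
  | succ m ih =>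
      have h1 : MLe (G.gen G.rf18 (G.r (σ m)) ((i + m) + 1)) (G.gen G.rf18 (G.s (σ m)) (i + m)) :=
        G.gen_step_le (σ m) (i + m)
      rw [ch m] at h1
      have harith : (i + (m+1 : ℕ) : ℤ) = (i + m) + 1 := by push_cast; ring
      rw [harith]
      exact MLe_trans h1 ih

end DGraph
end Aux18b
section Aux18c
set_option linter.unusedSectionVars false
set_option maxHeartbeats 1000000
namespace DGraph
open Finsupp

noncomputable def iotaZ18 (V : Type) : ((V × ℤ) →₀ ℕ) →+ ((V × ℤ) →₀ ℤ) :=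
  Finsupp.mapRange.addMonoidHom (Nat.castAddMonoidHom ℤ)

lemma iotaZ18_single {V : Type} (p : V × ℤ) (n : ℕ) :
    iotaZ18 V (Finsupp.single p n) = Finsupp.single p (n : ℤ) := by
  simp [iotaZ18]

variable {V Ed : Type} [Fintype V] [Fintype Ed] (G : DGraph V Ed)

open Classical in
noncomputable def DD (p : V × ℤ) : (V × ℤ) →₀ ℤ :=
  if G.IsSink p.1 then 0 else
    Finsupp.single p 1 - ∑ e ∈ (G.rf18 p.1).toFinset, Finsupp.single (G.r e, p.2 + 1) 1

noncomputable def Theta : ((V × ℤ) →₀ ℤ) →+ ((V × ℤ) →₀ ℤ) :=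
  Finsupp.liftAddHom (fun p => (zmultiplesHom _ (G.DD p)))

lemma Theta_single (p : V × ℤ) (z : ℤ) :
    G.Theta (Finsupp.single p z) = z • G.DD p := by
  simp [Theta, Finsupp.liftAddHom_apply_single]

noncomputable def PhiQ : G.Tal G.rf18 →+ ((V × ℤ) →₀ ℤ) ⧸ G.Theta.range :=
  AddCon.lift _ ((QuotientAddGroup.mk' G.Theta.range).comp (iotaZ18 V)) (by
    refine AddCon.addConGen_le.mpr fun a b hab => ?_
    rcases hab with ⟨v, i, hv, rfl, rfl⟩
    refine (AddCon.ker_rel _).mpr ?_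
    simp only [AddMonoidHom.comp_apply]
    rw [QuotientAddGroup.mk'_eq_mk']
    refine ⟨-iotaZ18 V (Finsupp.single (v,i) 1)
        + iotaZ18 V (∑ e ∈ (G.rf18 v).toFinset, Finsupp.single (G.r e, i + 1) 1),
      ⟨Finsupp.single (v,i) (-1), ?_⟩, by abel⟩
    rw [Theta_single, DD, if_neg hv]
    simp only [map_sum, iotaZ18_single, Nat.cast_one]
    rw [neg_one_zsmul]
    abel)

lemma PhiQ_gen (v : V) (i : ℤ) :
    G.PhiQ (G.gen G.rf18 v i)
      = (QuotientAddGroup.mk' G.Theta.range) (Finsupp.single (v,i) (1:ℤ)) := by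
  show G.PhiQ (((Finsupp.single (v, i) 1 : (V × ℤ) →₀ ℕ) : (G.talCon G.rf18).Quotient)) = _
  rw [PhiQ]
  erw [AddCon.lift_coe]
  simp only [AddMonoidHom.comp_apply]
  congr 1
  exact iotaZ18_single _ _

lemma extract18 (w : V) (k : ℕ) (β : V → ℤ) (hβw : β w = (k:ℤ)) (hβ : ∀ u, u ≠ w → β u = 0)
    (h : ∑ u : V, G.gen G.rf18 u (β u) = ∑ u : V, G.gen G.rf18 u 0) :
    ∃ cc : (V × ℤ) →₀ ℤ,
      G.Theta cc = Finsupp.single (w, (0:ℤ)) 1 - Finsupp.single (w, (k:ℤ)) 1 := by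
  have h2 := congrArg G.PhiQ h
  rw [map_sum, map_sum] at h2
  simp only [PhiQ_gen] at h2
  rw [← map_sum, ← map_sum] at h2
  rw [QuotientAddGroup.mk'_eq_mk'] at h2
  obtain ⟨z, ⟨cc, hcc⟩, hzeq⟩ := h2
  refine ⟨cc, ?_⟩
  rw [hcc]
  have hz : z = ∑ u : V, Finsupp.single (u, (0:ℤ)) (1:ℤ)
      - ∑ u : V, Finsupp.single (u, β u) (1:ℤ) := by
    rw [← hzeq]; abel
  rw [hz, ← Finset.sum_sub_distrib]
  rw [Finset.sum_eq_single w]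
  · rw [hβw]
  · intro u _ hu
    rw [hβ u hu]
    simp
  · intro h'; exact absurd (Finset.mem_univ w) h'

open Classical in
noncomputable def csk (cc : (V × ℤ) →₀ ℤ) : V → ℤ → ℤ :=
  fun u j => if G.IsSink u then 0 else cc (u, j)

open Classical in
lemma toFinset_filter18 (v : V) :
    (G.rf18 v).toFinset = Finset.univ.filter (fun e => G.s e = v) := by
  ext e; simp [Set.Finite.mem_toFinset]

open Classical in
lemma key_pointwise (u : V) (j : ℤ) (p : V × ℤ) (z : ℤ) :
    z * (G.DD p (u,j))
      = (if p = (u,j) then (if G.IsSink u then 0 else z) else 0)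
        - (∑ e : Ed, if (G.s e = p.1 ∧ G.r e = u ∧ p.2 + 1 = j) then z else 0) := by
  obtain ⟨v, i⟩ := p
  by_cases hv : G.IsSink v
  · rw [DD, if_pos hv]
    have h1 : (if (v,i) = (u,j) then (if G.IsSink u then 0 else z) else 0) = 0 := by
      by_cases he : (v,i) = (u,j)
      · rw [Prod.mk.injEq] at he
        obtain ⟨rfl, rfl⟩ := he
        rw [if_pos rfl, if_pos hv]
      · rw [if_neg he]
    have h2 : (∑ e : Ed, if (G.s e = v ∧ G.r e = u ∧ i + 1 = j) then z else 0) = 0 := by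
      apply Finset.sum_eq_zero
      intro e _
      rw [if_neg]
      rintro ⟨hse, -, -⟩
      exact hv e hse
    show z * (0 : (V × ℤ) →₀ ℤ) (u, j) = _
    rw [h1, h2]
    simp
  · rw [DD, if_neg hv]
    rw [Finsupp.sub_apply, Finsupp.single_apply, Finsupp.finset_sum_apply]
    have hB : ∑ e ∈ (G.rf18 v).toFinset, (Finsupp.single (G.r e, i + 1) (1:ℤ)) (u, j)
        = ∑ e : Ed, (if (G.s e = v ∧ G.r e = u ∧ i + 1 = j) then (1:ℤ) else 0) := by
      rw [toFinset_filter18, Finset.sum_filter]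
      apply Finset.sum_congr rfl
      intro e _
      rw [Finsupp.single_apply]
      by_cases h1 : G.s e = v
      · rw [if_pos h1]
        by_cases h2 : ((G.r e, i+1) : V × ℤ) = (u, j)
        · rw [if_pos h2, if_pos]
          rw [Prod.mk.injEq] at h2
          exact ⟨h1, h2.1, h2.2⟩
        · rw [if_neg h2, if_neg]
          rw [Prod.mk.injEq] at h2
          rintro ⟨-, ha, hb⟩
          exact h2 ⟨ha, hb⟩
      · rw [if_neg h1, if_neg]
        rintro ⟨ha, -, -⟩
        exact h1 ha
    rw [hB, mul_sub]
    congr 1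
    · by_cases he : ((v,i) : V × ℤ) = (u,j)
      · rw [if_pos he, mul_one, if_pos he]
        rw [Prod.mk.injEq] at he
        obtain ⟨rfl, rfl⟩ := he
        rw [if_neg hv]
      · rw [if_neg he, mul_zero, if_neg he]
    · rw [Finset.mul_sum]
      apply Finset.sum_congr rfl
      intro e _
      rw [mul_ite, mul_one, mul_zero]

end DGraph
end Aux18c
section Aux18d
set_option linter.unusedSectionVars false
set_option maxHeartbeats 1000000
namespace DGraph
open Finsupp
variable {V Ed : Type} [Fintype V] [Fintype Ed] (G : DGraph V Ed)

open Classical in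
lemma nonsink_src (e : Ed) : G.csk = G.csk := rfl

open Classical in
lemma coeffE (w : V) (k : ℕ) (cc : (V × ℤ) →₀ ℤ)
    (hcc : G.Theta cc = Finsupp.single (w, (0:ℤ)) 1 - Finsupp.single (w, (k:ℤ)) 1)
    (u : V) (j : ℤ) :
    G.csk cc u j - (∑ e : Ed, if G.r e = u then G.csk cc (G.s e) (j-1) else 0)
      = (if (u = w ∧ j = 0) then 1 else 0) - (if (u = w ∧ j = (k:ℤ)) then 1 else 0) := by
  have happ := congrArg (fun g : (V × ℤ) →₀ ℤ => g (u, j)) hcc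
  -- RHS of happ
  have hrhs : ((Finsupp.single (w, (0:ℤ)) (1:ℤ) - Finsupp.single (w, (k:ℤ)) 1 : (V × ℤ) →₀ ℤ)) (u, j)
      = (if (u = w ∧ j = 0) then 1 else 0) - (if (u = w ∧ j = (k:ℤ)) then (1:ℤ) else 0) := by
    rw [Finsupp.sub_apply, Finsupp.single_apply, Finsupp.single_apply]
    congr 1
    · by_cases h1 : ((w, (0:ℤ)) : V × ℤ) = (u, j)
      · rw [if_pos h1, if_pos]
        rw [Prod.mk.injEq] at h1
        exact ⟨h1.1.symm, h1.2.symm⟩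
      · rw [if_neg h1, if_neg]
        rw [Prod.mk.injEq] at h1
        rintro ⟨ha, hb⟩
        exact h1 ⟨ha.symm, hb.symm⟩
    · by_cases h1 : ((w, (k:ℤ)) : V × ℤ) = (u, j)
      · rw [if_pos h1, if_pos]
        rw [Prod.mk.injEq] at h1
        exact ⟨h1.1.symm, h1.2.symm⟩
      · rw [if_neg h1, if_neg]
        rw [Prod.mk.injEq] at h1
        rintro ⟨ha, hb⟩
        exact h1 ⟨ha.symm, hb.symm⟩
  -- LHS of happ
  have hlhs : (G.Theta cc) (u, j)
      = G.csk cc u j - (∑ e : Ed, if G.r e = u then G.csk cc (G.s e) (j-1) else 0) := by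
    have h0 : G.Theta cc = cc.sum fun p z => z • G.DD p := by
      rw [Theta, Finsupp.liftAddHom_apply]
      rfl
    rw [h0]
    simp only [Finsupp.sum]
    rw [Finsupp.finset_sum_apply]
    have h1 : ∑ p ∈ cc.support, (cc p • G.DD p) (u, j)
        = ∑ p ∈ cc.support, cc p * (G.DD p (u, j)) := by
      apply Finset.sum_congr rfl
      intro p _
      rw [Finsupp.smul_apply, smul_eq_mul]
    rw [h1]
    have h2 : ∑ p ∈ cc.support, cc p * (G.DD p (u, j))
        = (∑ p ∈ cc.support, (if p = (u,j) then (if G.IsSink u then 0 else cc p) else 0))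
          - ∑ p ∈ cc.support, (∑ e : Ed, if (G.s e = p.1 ∧ G.r e = u ∧ p.2 + 1 = j) then cc p else 0) := by
      rw [← Finset.sum_sub_distrib]
      apply Finset.sum_congr rfl
      intro p _
      exact G.key_pointwise u j p (cc p)
    rw [h2]
    congr 1
    · -- first sum equals csk
      rw [Finset.sum_ite_eq' cc.support (u,j) (fun q => if G.IsSink u then 0 else cc q)]
      by_cases hm : (u, j) ∈ cc.support
      · rw [if_pos hm]; rfl
      · rw [if_neg hm]
        rw [Finsupp.notMem_support_iff] at hm
        show (0:ℤ) = G.csk cc u j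
        rw [csk]
        by_cases hs : G.IsSink u
        · rw [if_pos hs]
        · rw [if_neg hs, hm]
    · -- second sum
      rw [Finset.sum_comm]
      apply Finset.sum_congr rfl
      intro e _
      by_cases hre : G.r e = u
      · rw [if_pos hre]
        have : ∀ p ∈ cc.support,
            (if (G.s e = p.1 ∧ G.r e = u ∧ p.2 + 1 = j) then cc p else 0)
              = (if p = (G.s e, j - 1) then cc p else 0) := by
          intro p _
          by_cases hp : p = (G.s e, j-1)
          · subst hp
            rw [if_pos rfl, if_pos]
            exact ⟨rfl, hre, by ring⟩
          · rw [if_neg hp, if_neg]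
            rintro ⟨h1, -, h3⟩
            apply hp
            have : p.2 = j - 1 := by omega
            rw [Prod.ext_iff]
            exact ⟨h1.symm, this⟩
        rw [Finset.sum_congr rfl this]
        rw [Finset.sum_ite_eq' cc.support (G.s e, j-1) (fun p => cc p)]
        have hsnk : ¬ G.IsSink (G.s e) := G.nonsink_of_edge
        by_cases hm : ((G.s e, j-1) : V × ℤ) ∈ cc.support
        · rw [if_pos hm, csk, if_neg hsnk]
        · rw [if_neg hm]
          rw [Finsupp.notMem_support_iff] at hm
          rw [csk, if_neg hsnk, hm]
      · rw [if_neg hre]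
        apply Finset.sum_eq_zero
        intro p _
        rw [if_neg]
        rintro ⟨-, hx, -⟩
        exact hre hx
  rw [hlhs, hrhs] at happ
  exact happ

end DGraph
end Aux18d

section Aux18e
set_option linter.unusedSectionVars false
set_option maxHeartbeats 1000000
namespace DGraph
open Finsupp
variable {V Ed : Type} [Fintype V] [Fintype Ed] (G : DGraph V Ed)

open Classical in
noncomputable def pc18 (w : V) : ℕ → V → ℕ
  | 0, v => if v = w then 1 else 0
  | (n+1), v => ∑ e : Ed, if G.r e = v then pc18 w n (G.s e) else 0

open Classical in
noncomputable def qq18 (w : V) (j : ℤ) (v : V) : ℤ :=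
  if 0 ≤ j then (G.pc18 w j.toNat v : ℤ) else 0

open Classical in
lemma pc18_succ (w : V) (n : ℕ) (v : V) :
    G.pc18 w (n+1) v = ∑ e : Ed, if G.r e = v then G.pc18 w n (G.s e) else 0 := by
  rw [pc18]

lemma qq18_nat (w v : V) (n : ℕ) : G.qq18 w (n:ℤ) v = (G.pc18 w n v : ℤ) := by
  simp [qq18]

lemma qq18_neg (w v : V) {j : ℤ} (h : j < 0) : G.qq18 w j v = 0 := if_neg (by omega)

open Classical in
lemma qq18_rec (w : V) (j : ℤ) (u : V) :
    G.qq18 w j u = (∑ e : Ed, if G.r e = u then G.qq18 w (j-1) (G.s e) else 0)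
      + (if (u = w ∧ j = 0) then 1 else 0) := by
  rcases lt_trichotomy j 0 with h|h|h
  · rw [G.qq18_neg w u h]
    have hz : ∀ e : Ed, (if G.r e = u then G.qq18 w (j-1) (G.s e) else 0) = 0 := by
      intro e
      by_cases hc : G.r e = u
      · rw [if_pos hc, G.qq18_neg _ _ (by omega)]
      · rw [if_neg hc]
    rw [Finset.sum_congr rfl (fun e _ => hz e), Finset.sum_const_zero, if_neg, add_zero]
    rintro ⟨-, h0⟩; omega
  · subst h
    have h1 : G.qq18 w 0 u = (if u = w then 1 else 0 : ℤ) := by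
      rw [qq18, if_pos le_rfl]
      show ((G.pc18 w 0 u : ℕ) : ℤ) = _
      rw [pc18]
      by_cases hc : u = w
      · rw [if_pos hc, if_pos hc]; rfl
      · rw [if_neg hc, if_neg hc]; rfl
    rw [h1]
    have hz : ∀ e : Ed, (if G.r e = u then G.qq18 w (0-1) (G.s e) else 0) = 0 := by
      intro e
      by_cases hc : G.r e = u
      · rw [if_pos hc, G.qq18_neg _ _ (by omega)]
      · rw [if_neg hc]
    rw [Finset.sum_congr rfl (fun e _ => hz e), Finset.sum_const_zero, zero_add]
    by_cases hc : u = w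
    · rw [if_pos hc, if_pos ⟨hc, rfl⟩]
    · rw [if_neg hc, if_neg (by rintro ⟨hh,-⟩; exact hc hh)]
  · have h0 : (0:ℤ) ≤ j := le_of_lt h
    have h1 : j.toNat = (j-1).toNat + 1 := by omega
    rw [qq18, if_pos h0, h1, pc18_succ]
    rw [Nat.cast_sum]
    rw [if_neg (by rintro ⟨-, hh⟩; omega), add_zero]
    apply Finset.sum_congr rfl
    intro e _
    rw [apply_ite ((↑) : ℕ → ℤ), Nat.cast_zero]
    congr 1
    rw [qq18, if_pos (by omega)]

open Classical in
lemma no_cc18 (w : V) (k : ℕ) (hk : 1 ≤ k)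
    (sg : ℕ → Ed) (ch : ∀ i, G.r (sg i) = G.s (sg (i+1))) (hsg0 : G.s (sg 0) = w)
    (t0 : ℕ) (ht0 : t0 < k) (hper : ∀ i, sg (i + k) = sg i)
    (f : Ed) (hf : G.s f = G.s (sg t0)) (hfne : f ≠ sg t0)
    (cc : (V × ℤ) →₀ ℤ)
    (hcc : G.Theta cc = Finsupp.single (w, (0:ℤ)) 1 - Finsupp.single (w, (k:ℤ)) 1) :
    False := by
  set B : ℤ := -(((cc.support.sup fun p => (-p.2).toNat) : ℕ) : ℤ) - 1 with hBdef
  have hccB : ∀ (u : V) (j : ℤ), j ≤ B → cc (u, j) = 0 := by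
    intro u j hj
    by_contra hne
    have hmem : ((u,j) : V × ℤ) ∈ cc.support := Finsupp.mem_support_iff.2 hne
    have hle := Finset.le_sup (f := fun p : V × ℤ => (-p.2).toNat) hmem
    have h2 : (((-j).toNat : ℕ) : ℤ) ≤ ((cc.support.sup fun p => (-p.2).toNat : ℕ) : ℤ) :=
      Int.ofNat_le.2 hle
    have h3 : (-j) ≤ (((-j).toNat : ℕ) : ℤ) := Int.self_le_toNat _
    omega
  have hcskB : ∀ (u : V) (j : ℤ), j ≤ B → G.csk cc u j = 0 := by
    intro u j hj
    rw [csk]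
    by_cases hs : G.IsSink u
    · rw [if_pos hs]
    · rw [if_neg hs]; exact hccB u j hj
  have hBneg : B < 0 := by
    have : (0:ℤ) ≤ ((cc.support.sup fun p => (-p.2).toNat : ℕ) : ℤ) := Int.ofNat_nonneg _
    omega
  have main : ∀ (n : ℕ) (j : ℤ), j ≤ B + n → ∀ u,
      G.csk cc u j = G.qq18 w j u - G.qq18 w (j - k) u := by
    intro n
    induction n with
    | zero =>
        intro j hj u
        rw [hcskB u j (by omega), G.qq18_neg _ _ (by omega), G.qq18_neg _ _ (by omega)]
        ring
    | succ n ih =>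
        intro j hj u
        by_cases hj' : j ≤ B + n
        · exact ih j hj' u
        have hE := G.coeffE w k cc hcc u j
        have hqj := G.qq18_rec w j u
        have hqjk := G.qq18_rec w (j - k) u
        have hsum : (∑ e : Ed, if G.r e = u then G.csk cc (G.s e) (j-1) else 0)
            = (∑ e : Ed, if G.r e = u then G.qq18 w (j-1) (G.s e) else 0)
              - (∑ e : Ed, if G.r e = u then G.qq18 w (j-(k:ℤ)-1) (G.s e) else 0) := by
          rw [← Finset.sum_sub_distrib]
          apply Finset.sum_congr rfl
          intro e _
          by_cases hc : G.r e = u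
          · rw [if_pos hc, if_pos hc, if_pos hc]
            rw [ih (j-1) (by omega) (G.s e)]
            have harg : j - 1 - (k:ℤ) = j - (k:ℤ) - 1 := by ring
            rw [harg]
          · rw [if_neg hc, if_neg hc, if_neg hc]; ring
        have hdelta : (if (u = w ∧ j - (k:ℤ) = 0) then (1:ℤ) else 0)
            = (if (u = w ∧ j = (k:ℤ)) then (1:ℤ) else 0) := by
          by_cases hc : u = w ∧ j = (k:ℤ)
          · rw [if_pos hc, if_pos ⟨hc.1, by omega⟩]
          · rw [if_neg hc, if_neg]
            rintro ⟨hc1, hc2⟩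
            exact hc ⟨hc1, by omega⟩
        rw [hdelta] at hqjk
        rw [hsum] at hE
        linarith [hE, hqj, hqjk]
  have hmain : ∀ (j : ℤ) (u : V), G.csk cc u j = G.qq18 w j u - G.qq18 w (j - k) u := by
    intro j u
    exact main (j - B).toNat j (by omega) u
  have hsink : ∀ u, G.IsSink u → ∀ n : ℕ, G.pc18 w n u = 0 := by
    intro u hu n
    induction n using Nat.strong_induction_on with
    | _ n ih =>
      have h0 : G.csk cc u (n : ℤ) = 0 := by rw [csk, if_pos hu]
      rw [hmain] at h0
      by_cases hc : n < k
      · rw [G.qq18_neg w u (show (n:ℤ) - (k:ℤ) < 0 by omega), G.qq18_nat] at h0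
        omega
      · push_neg at hc
        have harg : (n:ℤ) - k = ((n - k : ℕ) : ℤ) := by omega
        rw [harg, G.qq18_nat, G.qq18_nat] at h0
        have hik := ih (n - k) (by omega)
        omega
  set J : ℕ := (cc.support.sup fun p => p.2.toNat) + 1 with hJdef
  have hccJ : ∀ (u : V) (j : ℤ), (J:ℤ) ≤ j → cc (u, j) = 0 := by
    intro u j hj
    by_contra hne
    have hmem : ((u,j) : V × ℤ) ∈ cc.support := Finsupp.mem_support_iff.2 hne
    have hle := Finset.le_sup (f := fun p : V × ℤ => p.2.toNat) hmem
    have h2 : ((j.toNat : ℕ) : ℤ) ≤ ((cc.support.sup fun p => p.2.toNat : ℕ) : ℤ) :=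
      Int.ofNat_le.2 hle
    have h3 : j ≤ ((j.toNat : ℕ) : ℤ) := Int.self_le_toNat _
    have h4 : ((J:ℕ) : ℤ) = ((cc.support.sup fun p => p.2.toNat : ℕ) : ℤ) + 1 := by
      rw [hJdef]; push_cast; ring
    omega
  have hper' : ∀ (n : ℕ), J ≤ n → ∀ u, G.pc18 w (n + k) u = G.pc18 w n u := by
    intro n hn u
    have h0 : G.csk cc u ((n + k : ℕ) : ℤ) = 0 := by
      rw [csk]
      by_cases hs : G.IsSink u
      · rw [if_pos hs]
      · rw [if_neg hs]
        exact hccJ u _ (by push_cast; omega)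
    rw [hmain] at h0
    have harg : ((n + k : ℕ) : ℤ) - k = (n : ℤ) := by push_cast; ring
    rw [harg] at h0
    have h5 : ((n + k : ℕ) : ℤ) = (((n+k) : ℕ) : ℤ) := rfl
    rw [G.qq18_nat, G.qq18_nat] at h0
    omega
  set N : ℕ → ℕ := fun n => ∑ u : V, G.pc18 w n u with hNdef
  have hNsucc : ∀ n, N (n+1) = ∑ e : Ed, G.pc18 w n (G.s e) := by
    intro n
    show (∑ u : V, G.pc18 w (n+1) u) = _
    have hpt : ∀ u : V, G.pc18 w (n+1) u
        = ∑ e : Ed, if G.r e = u then G.pc18 w n (G.s e) else 0 := fun u => rfl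
    rw [Finset.sum_congr rfl (fun u _ => hpt u), Finset.sum_comm]
    apply Finset.sum_congr rfl
    intro e _
    rw [Finset.sum_ite_eq Finset.univ (G.r e) (fun _ => G.pc18 w n (G.s e))]
    rw [if_pos (Finset.mem_univ _)]
  have hregroup : ∀ n, (∑ e : Ed, G.pc18 w n (G.s e))
      = ∑ u : V, (Finset.univ.filter (fun e : Ed => G.s e = u)).card * G.pc18 w n u := by
    intro n
    rw [← Finset.sum_fiberwise_of_maps_to (fun (e : Ed) (_ : e ∈ Finset.univ) => Finset.mem_univ (G.s e))
      (fun e => G.pc18 w n (G.s e))]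
    apply Finset.sum_congr rfl
    intro u _
    have hcongr : ∀ e ∈ Finset.univ.filter (fun e : Ed => G.s e = u),
        G.pc18 w n (G.s e) = G.pc18 w n u := by
      intro e he
      rw [(Finset.mem_filter.1 he).2]
    rw [Finset.sum_congr rfl hcongr, Finset.sum_const, smul_eq_mul]
  have hmono : ∀ n, N n ≤ N (n+1) := by
    intro n
    rw [hNsucc, hregroup]
    apply Finset.sum_le_sum
    intro u _
    by_cases hz : G.pc18 w n u = 0
    · rw [hz]; simp
    · have hns : ¬ G.IsSink u := by
        intro hs
        exact hz (hsink u hs n)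
      rw [DGraph.IsSink] at hns
      push_neg at hns
      obtain ⟨e, he⟩ := hns
      have hcard : 0 < (Finset.univ.filter (fun e : Ed => G.s e = u)).card := by
        apply Finset.card_pos.2
        exact ⟨e, Finset.mem_filter.2 ⟨Finset.mem_univ _, he⟩⟩
      calc G.pc18 w n u = 1 * G.pc18 w n u := (one_mul _).symm
        _ ≤ _ := Nat.mul_le_mul_right _ hcard
  have hsgpc : ∀ m, 1 ≤ G.pc18 w m (G.s (sg m)) := by
    intro m
    induction m with
    | zero =>
        rw [hsg0]
        show 1 ≤ G.pc18 w 0 w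
        rw [pc18, if_pos rfl]
    | succ m ih =>
        have hs : G.s (sg (m+1)) = G.r (sg m) := (ch m).symm
        rw [hs]
        show 1 ≤ ∑ e : Ed, if G.r e = G.r (sg m) then G.pc18 w m (G.s e) else 0
        have hle := Finset.single_le_sum
          (f := fun e : Ed => if G.r e = G.r (sg m) then G.pc18 w m (G.s e) else 0)
          (fun i _ => Nat.zero_le _) (Finset.mem_univ (sg m))
        have hle2 : G.pc18 w m (G.s (sg m))
            ≤ ∑ e : Ed, if G.r e = G.r (sg m) then G.pc18 w m (G.s e) else 0 := by
          simpa using hle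
        exact le_trans ih hle2
  have hpersg : ∀ jj : ℕ, sg (jj * k + t0) = sg t0 := by
    intro jj
    induction jj with
    | zero => simp
    | succ jj ih =>
        have harr : (jj+1) * k + t0 = (jj * k + t0) + k := by ring
        rw [harr, hper, ih]
  set m := J * k + t0 with hmdef
  have hJm : J ≤ m := by
    have h1 : J ≤ J * k := Nat.le_mul_of_pos_right J (by omega)
    omega
  have hzv : G.s (sg m) = G.s f := by
    rw [hmdef, hpersg J, ← hf]
  have h1m : 1 ≤ G.pc18 w m (G.s f) := by
    rw [← hzv]; exact hsgpc m
  have hcard2 : 2 ≤ (Finset.univ.filter (fun e : Ed => G.s e = G.s f)).card := by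
    apply Finset.one_lt_card.2
    refine ⟨f, Finset.mem_filter.2 ⟨Finset.mem_univ _, rfl⟩,
      sg t0, Finset.mem_filter.2 ⟨Finset.mem_univ _, hf.symm⟩, hfne⟩
  have hlt : N m < N (m+1) := by
    rw [hNsucc, hregroup]
    apply Finset.sum_lt_sum
    · intro u _
      by_cases hz : G.pc18 w m u = 0
      · rw [hz]; simp
      · have hns : ¬ G.IsSink u := fun hs => hz (hsink u hs m)
        rw [DGraph.IsSink] at hns
        push_neg at hns
        obtain ⟨e, he⟩ := hns
        have hcard : 0 < (Finset.univ.filter (fun e : Ed => G.s e = u)).card :=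
          Finset.card_pos.2 ⟨e, Finset.mem_filter.2 ⟨Finset.mem_univ _, he⟩⟩
        calc G.pc18 w m u = 1 * G.pc18 w m u := (one_mul _).symm
          _ ≤ _ := Nat.mul_le_mul_right _ hcard
    · refine ⟨G.s f, Finset.mem_univ _, ?_⟩
      calc G.pc18 w m (G.s f) = 1 * G.pc18 w m (G.s f) := (one_mul _).symm
        _ < 2 * G.pc18 w m (G.s f) := by omega
        _ ≤ _ := Nat.mul_le_mul_right _ hcard2
  have hNper : N (m + k) = N m := by
    show (∑ u : V, G.pc18 w (m+k) u) = ∑ u : V, G.pc18 w m u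
    exact Finset.sum_congr rfl (fun u _ => hper' m hJm u)
  have hmono' : Monotone N := monotone_nat_of_le_succ hmono
  have hfin : N (m+1) ≤ N (m+k) := hmono' (by omega)
  omega

end DGraph
end Aux18e
section Aux18f
set_option linter.unusedSectionVars false
set_option maxHeartbeats 1000000
namespace DGraph
variable {V Ed : Type} [Fintype V] [Fintype Ed] (G : DGraph V Ed)

open Classical in
lemma rev18 (hcyc : ∃ c : G.GPath, c.IsCycle ∧ c.HasExit) :
    (∃ (n : ℕ), 1 ≤ n ∧
      ∃ (x : Fin n → G.Tal G.rowFinite_of_finite) (α : Fin n → ℤ),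
        MLe (∑ u : V, G.gen G.rowFinite_of_finite u 0) (∑ i, x i) ∧
        MLe (∑ i, G.shift G.rowFinite_of_finite (α i) (x i))
            (∑ u : V, G.gen G.rowFinite_of_finite u 0) ∧
        (∑ i, G.shift G.rowFinite_of_finite (α i) (x i)) ≠
          ∑ u : V, G.gen G.rowFinite_of_finite u 0) := by
  obtain ⟨c, hc, f, e0, he0mem, hsf, hfne⟩ := hcyc
  obtain ⟨σ, k, hk, ch, hper, hσ0, hσt, hkdef⟩ := G.cyc_fn c hc
  obtain ⟨t0, ht0, he0⟩ := List.mem_iff_getElem.1 he0mem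
  set w : V := G.s (σ 0) with hw
  set β : V → ℤ := fun u => if u = w then (k:ℤ) else 0 with hβ
  have hβw : β w = (k:ℤ) := if_pos rfl
  have hβ0 : ∀ u, u ≠ w → β u = 0 := fun u hu => if_neg hu
  have hsum1 : (∑ i, G.gen G.rowFinite_of_finite ((Fintype.equivFin V).symm i) 0)
      = ∑ u : V, G.gen G.rowFinite_of_finite u 0 :=
    Equiv.sum_comp (Fintype.equivFin V).symm (fun u => G.gen G.rowFinite_of_finite u 0)
  have hsum2 : (∑ i, G.shift G.rowFinite_of_finite (β ((Fintype.equivFin V).symm i))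
        (G.gen G.rowFinite_of_finite ((Fintype.equivFin V).symm i) 0))
      = ∑ u : V, G.gen G.rowFinite_of_finite u (β u) := by
    rw [Equiv.sum_comp (Fintype.equivFin V).symm
      (fun u => G.shift G.rowFinite_of_finite (β u) (G.gen G.rowFinite_of_finite u 0))]
    apply Finset.sum_congr rfl
    intro u _
    rw [G.shift_gen (β u) u 0, zero_add]
  refine ⟨Fintype.card V, Fintype.card_pos_iff.2 ⟨w⟩,
    fun i => G.gen G.rowFinite_of_finite ((Fintype.equivFin V).symm i) 0,
    fun i => β ((Fintype.equivFin V).symm i), ?_, ?_, ?_⟩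
  · rw [hsum1]; exact MLe_refl _
  · rw [hsum2]
    have hσk : σ k = σ 0 := by
      have := hper 0
      simpa using this
    have hwk : MLe (G.gen G.rowFinite_of_finite w (k:ℤ)) (G.gen G.rowFinite_of_finite w 0) := by
      have hml := G.mle_along σ ch k 0
      rw [hσk] at hml
      rw [zero_add] at hml
      exact hml
    have hsplit1 : (∑ u : V, G.gen G.rowFinite_of_finite u (β u))
        = G.gen G.rowFinite_of_finite w (k:ℤ)
          + ∑ u ∈ Finset.univ.erase w, G.gen G.rowFinite_of_finite u 0 := by
      rw [← Finset.add_sum_erase Finset.univ (fun u => G.gen G.rowFinite_of_finite u (β u))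
        (Finset.mem_univ w), hβw]
      congr 1
      apply Finset.sum_congr rfl
      intro u hu
      rw [hβ0 u (Finset.ne_of_mem_erase hu)]
    have hsplit2 : (∑ u : V, G.gen G.rowFinite_of_finite u 0)
        = G.gen G.rowFinite_of_finite w 0
          + ∑ u ∈ Finset.univ.erase w, G.gen G.rowFinite_of_finite u 0 := by
      rw [← Finset.add_sum_erase Finset.univ (fun u => G.gen G.rowFinite_of_finite u 0)
        (Finset.mem_univ w)]
    rw [hsplit1, hsplit2]
    exact MLe_add_right _ hwk
  · intro h
    rw [hsum2] at h
    obtain ⟨cc, hcc⟩ := G.extract18 w k β hβw hβ0 h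
    have ht0' : t0 < k := by omega
    have hsf' : G.s f = G.s (σ t0) := by
      rw [hσt t0 ht0, he0]
      exact hsf
    have hfne' : f ≠ σ t0 := by
      rw [hσt t0 ht0, he0]
      exact hfne
    exact G.no_cc18 w k hk σ ch rfl t0 ht0' hper f hsf' hfne' cc hcc

end DGraph
end Aux18f
section Aux18g
set_option linter.unusedSectionVars false
set_option maxHeartbeats 1000000
namespace DGraph
variable {V Ed : Type} [Fintype V] [Fintype Ed] (G : DGraph V Ed)

/-- walk along a list of edges -/
def WkL : List Ed → V → V → Prop
  | [], v, u => v = u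
  | e :: l, v, u => G.s e = v ∧ WkL l (G.r e) u

open Classical in
noncomputable def vtxL (l : List Ed) (u : V) (t : ℕ) : V :=
  if h : t < l.length then G.s (l[t]'h) else u

lemma vtxL_cons (e : Ed) (l : List Ed) (u : V) (t : ℕ) :
    G.vtxL (e :: l) u (t+1) = G.vtxL l u t := by
  rw [vtxL, vtxL]
  by_cases h : t < l.length
  · rw [dif_pos h, dif_pos (by simpa using Nat.succ_lt_succ h)]
    rfl
  · rw [dif_neg h, dif_neg (show ¬ (t+1 < (e :: l).length) by simp only [List.length_cons]; omega)]

lemma vtxL_zero_of_ne (l : List Ed) (u : V) (h : 0 < l.length) :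
    G.vtxL l u 0 = G.s (l[0]'h) := dif_pos h

lemma WkL_append {l1 l2 : List Ed} {v u : V} :
    G.WkL (l1 ++ l2) v u ↔ ∃ y, G.WkL l1 v y ∧ G.WkL l2 y u := by
  induction l1 generalizing v with
  | nil =>
      constructor
      · intro h; exact ⟨v, rfl, h⟩
      · rintro ⟨y, hy, h2⟩
        cases hy
        exact h2
  | cons e l ih =>
      constructor
      · rintro ⟨hs, hrest⟩
        obtain ⟨y, h1, h2⟩ := ih.1 hrest
        exact ⟨y, ⟨hs, h1⟩, h2⟩
      · rintro ⟨y, ⟨hs, h1⟩, h2⟩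
        exact ⟨hs, ih.2 ⟨y, h1, h2⟩⟩

lemma WkL_take {l : List Ed} {v u : V} (h : G.WkL l v u) :
    ∀ t, G.WkL (l.take t) v (G.vtxL l u t) := by
  induction l generalizing v with
  | nil =>
      intro t
      have hvu : v = u := h
      subst hvu
      rw [List.take_nil]
      show G.WkL [] v (G.vtxL [] v t)
      rw [vtxL, dif_neg (by simp)]
      rfl
  | cons e l ih =>
      intro t
      obtain ⟨hs, hrest⟩ := h
      match t with
      | 0 =>
          show v = G.vtxL (e :: l) u 0
          rw [G.vtxL_zero_of_ne _ _ (by simp)]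
          exact hs.symm
      | (t+1) =>
          rw [G.vtxL_cons]
          exact ⟨hs, ih hrest t⟩

lemma WkL_drop {l : List Ed} {v u : V} (h : G.WkL l v u) :
    ∀ t, G.WkL (l.drop t) (G.vtxL l u t) u := by
  induction l generalizing v with
  | nil =>
      intro t
      have hvu : v = u := h
      subst hvu
      rw [List.drop_nil]
      show G.WkL [] (G.vtxL [] v t) v
      rw [vtxL, dif_neg (by simp)]
      rfl
  | cons e l ih =>
      intro t
      obtain ⟨hs, hrest⟩ := h
      match t with
      | 0 =>
          show G.WkL (e :: l) (G.vtxL (e :: l) u 0) u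
          rw [G.vtxL_zero_of_ne _ _ (by simp)]
          exact ⟨rfl, hrest⟩
      | (t+1) =>
          rw [G.vtxL_cons]
          exact ih hrest t

lemma vtxL_drop (l : List Ed) (u : V) (a t : ℕ) :
    G.vtxL (l.drop a) u t = G.vtxL l u (a + t) := by
  rw [vtxL, vtxL]
  by_cases h : t < (l.drop a).length
  · rw [dif_pos h, dif_pos (by simp at h ⊢; omega)]
    congr 1
    rw [List.getElem_drop]
  · rw [dif_neg h, dif_neg (by simp at h ⊢; omega)]

lemma WkL_chain {l : List Ed} {v u : V} (h : G.WkL l v u) :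
    l.Chain' (fun e f => G.r e = G.s f) := by
  induction l generalizing v with
  | nil => exact List.isChain_nil
  | cons e l ih =>
      obtain ⟨hs, hrest⟩ := h
      cases l with
      | nil => exact List.isChain_singleton _
      | cons f l' =>
          refine List.isChain_cons_cons.2 ⟨hrest.1.symm, ih hrest⟩

lemma WkL_src {l : List Ed} {v u : V} (hl : l ≠ []) (h : G.WkL l v u) :
    G.s (l.head hl) = v := by
  cases l with
  | nil => exact absurd rfl hl
  | cons e l => exact h.1

lemma WkL_tgt {l : List Ed} {v u : V} (hl : l ≠ []) (h : G.WkL l v u) :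
    G.r (l.getLast hl) = u := by
  induction l generalizing v with
  | nil => exact absurd rfl hl
  | cons e l ih =>
      obtain ⟨hs, hrest⟩ := h
      cases l with
      | nil =>
          cases hrest
          rfl
      | cons f l' =>
          rw [List.getLast_cons (by simp)]
          exact ih (by simp) hrest

/-- `z` lies on a cycle -/
def OnCyc (z : V) : Prop := ∃ p : G.GPath, p.IsCycle ∧ z ∈ p.vset

lemma ext1 (hnc : ¬ ∃ c : G.GPath, c.IsCycle ∧ c.HasExit) {z : V} (hz : G.OnCyc z) :
    ∀ e : Ed, G.s e = z → (∀ e', G.s e' = z → e' = e) ∧ G.OnCyc (G.r e) := by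
  obtain ⟨p, hpc, et, hetmem, hetz⟩ := hz
  have hnoex : ¬ p.HasExit := fun hex => hnc ⟨p, hpc, hex⟩
  have huniq : ∀ e : Ed, G.s e = z → e = et := by
    intro e he
    by_contra hne
    exact hnoex ⟨e, et, hetmem, by rw [he, hetz], hne⟩
  intro e he
  refine ⟨fun e' he' => by rw [huniq e' he', huniq e he], ?_⟩
  rw [huniq e he]
  obtain ⟨t, ht, hget⟩ := List.mem_iff_getElem.1 hetmem
  by_cases hcase : t + 1 < p.edges.length
  · have hch := (List.isChain_iff_getElem.1 p.chain) t (by omega)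
    refine ⟨p, hpc, p.edges[t+1], List.getElem_mem _, ?_⟩
    rw [← hch, hget]
  · have htl : t = p.edges.length - 1 := by omega
    have hlast : p.edges.getLast p.ne = et := by
      rw [List.getLast_eq_getElem, ← hget]
      congr 1
      omega
    have h1 : G.r et = p.tgt := by rw [← hlast]; rfl
    have h2 : p.tgt = p.src := hpc.1.symm
    have h3 : p.src = G.s (p.edges.head p.ne) := rfl
    refine ⟨p, hpc, p.edges.head p.ne, List.head_mem _, ?_⟩
    rw [h1, h2, h3]

lemma propagate (hnc : ¬ ∃ c : G.GPath, c.IsCycle ∧ c.HasExit) {z u : V} {l : List Ed}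
    (hz : G.OnCyc z) (h : G.WkL l z u) : G.OnCyc u := by
  induction l generalizing z with
  | nil => cases h; exact hz
  | cons e l ih =>
      obtain ⟨hs, hrest⟩ := h
      exact ih ((G.ext1 hnc hz e hs).2) hrest

lemma not_nodup_sources {l : List Ed} (h : ¬ (l.map G.s).Nodup) :
    ∃ (a b : ℕ) (hab : a < b) (hb : b < l.length),
      G.s (l[a]'(lt_trans hab hb)) = G.s (l[b]'hb) := by
  rw [List.nodup_iff_injective_get] at h
  rw [Function.Injective] at h
  push_neg at h
  obtain ⟨i, j, heq, hne⟩ := h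
  have hlen : (l.map G.s).length = l.length := List.length_map _
  simp only [List.get_eq_getElem, List.getElem_map] at heq
  rcases Nat.lt_or_ge i.1 j.1 with hlt | hge
  · exact ⟨i.1, j.1, hlt, by omega, by convert heq using 2⟩

  · have : j.1 < i.1 := by
      rcases Nat.lt_or_ge j.1 i.1 with h1 | h1
      · exact h1
      · exact absurd (Fin.ext (by omega)) hne
    exact ⟨j.1, i.1, this, by omega, by convert heq.symm using 2⟩

lemma CWk (hnc : ¬ ∃ c : G.GPath, c.IsCycle ∧ c.HasExit) :
    ∀ (n : ℕ) (l : List Ed) (z : V), l.length = n → l ≠ [] → G.WkL l z z →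
      ∃ y, G.OnCyc y ∧ ∃ l2, G.WkL l2 y z := by
  intro n
  induction n using Nat.strong_induction_on with
  | _ n ih =>
    intro l z hlen hne hwk
    by_cases hnd : (l.map G.s).Nodup
    · -- l is a cycle through z
      have hpne : l ≠ [] := hne
      refine ⟨z, ⟨⟨l, hpne, G.WkL_chain hwk⟩, ⟨?_, ?_⟩, ?_⟩, [], rfl⟩
      · show G.s (l.head hpne) = G.r (l.getLast hpne)
        rw [G.WkL_src hpne hwk, G.WkL_tgt hpne hwk]
      · exact List.Nodup.of_map _ hnd
      · exact ⟨l.head hpne, List.head_mem _, G.WkL_src hpne hwk⟩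
    · obtain ⟨a, b, hab, hb, heq⟩ := G.not_nodup_sources hnd
      -- splice
      set l' := l.take a ++ l.drop b with hl'
      have hwk1 : G.WkL (l.take a) z (G.vtxL l z a) := G.WkL_take hwk a
      have hwk2 : G.WkL (l.drop b) (G.vtxL l z b) z := G.WkL_drop hwk b
      have hva : G.vtxL l z a = G.s (l[a]'(by omega)) := dif_pos (by omega)
      have hvb : G.vtxL l z b = G.s (l[b]'(by omega)) := dif_pos (by omega)
      have hwk' : G.WkL l' z z := by
        rw [hl', G.WkL_append]
        exact ⟨G.vtxL l z a, hwk1, by rw [hva, heq, ← hvb]; exact hwk2⟩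
      have hne' : l' ≠ [] := by
        rw [hl']
        intro hcon
        have : l.drop b = [] := by
          rcases List.append_eq_nil_iff.1 hcon with ⟨-, h2⟩
          exact h2
        have := congrArg List.length this
        simp at this
        omega
      have hlen' : l'.length < n := by
        rw [hl']
        rw [List.length_append, List.length_take, List.length_drop]
        omega
      exact ih l'.length hlen' l' z rfl hne' hwk'

lemma star_aux (hnc : ¬ ∃ c : G.GPath, c.IsCycle ∧ c.HasExit) {l : List Ed} {v u : V}
    (hwk : G.WkL l v u) (a b : ℕ) (hab : a < b) (hb : b ≤ l.length)
    (heq : G.vtxL l u a = G.vtxL l u b) : G.OnCyc u := by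
  have hwkd : G.WkL (l.drop a) (G.vtxL l u a) u := G.WkL_drop hwk a
  have hwks : G.WkL ((l.drop a).take (b - a)) (G.vtxL l u a)
      (G.vtxL (l.drop a) u (b - a)) := G.WkL_take hwkd (b - a)
  have hv : G.vtxL (l.drop a) u (b - a) = G.vtxL l u b := by
    rw [G.vtxL_drop]
    congr 1
    omega
  rw [hv, ← heq] at hwks
  have hsegne : (l.drop a).take (b - a) ≠ [] := by
    intro hcon
    have := congrArg List.length hcon
    simp only [List.length_take, List.length_drop, List.length_nil] at this
    omega
  obtain ⟨y, hy, l2, hwk2⟩ := G.CWk hnc ((l.drop a).take (b - a)).length _ _ rfl hsegne hwks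
  have hcomp : G.WkL (l2 ++ l.drop a) y u := G.WkL_append.2 ⟨G.vtxL l u a, hwk2, hwkd⟩
  exact G.propagate hnc hy hcomp

lemma star18 (hnc : ¬ ∃ c : G.GPath, c.IsCycle ∧ c.HasExit) {l : List Ed} {v u : V}
    (hwk : G.WkL l v u) (hlen : Fintype.card V ≤ l.length) : G.OnCyc u := by
  have hcard : Fintype.card V < Fintype.card (Fin (l.length + 1)) := by
    simp; omega
  obtain ⟨a, b, hne, heq⟩ := Fintype.exists_ne_map_eq_of_card_lt
    (fun t : Fin (l.length + 1) => G.vtxL l u t.1) hcard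
  -- wlog a < b
  rcases Nat.lt_or_ge a.1 b.1 with hab | hge
  case _ =>
    exact G.star_aux hnc hwk a.1 b.1 hab (by omega) heq
  case _ =>
    have hba : b.1 < a.1 := by
      rcases Nat.lt_or_ge b.1 a.1 with h1 | h1
      · exact h1
      · exact absurd (Fin.ext (by omega)) hne
    exact G.star_aux hnc hwk b.1 a.1 hba (by omega) heq.symm

end DGraph
end Aux18g
section Aux18h
set_option linter.unusedSectionVars false
set_option maxHeartbeats 1000000
namespace DGraph
open Finsupp
variable {V Ed : Type} [Fintype V] [Fintype Ed] (G : DGraph V Ed)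

open Classical in
noncomputable def mu18 : ℕ → V → ℕ
  | 0, _ => 1
  | (n+1), v => if G.IsSink v then 1 else ∑ e ∈ (G.rf18 v).toFinset, mu18 n (G.r e)

open Classical in
lemma mu18_succ (n : ℕ) (v : V) :
    G.mu18 (n+1) v = if G.IsSink v then 1 else ∑ e ∈ (G.rf18 v).toFinset, G.mu18 n (G.r e) := by
  rw [mu18]

lemma mu18_pos (n : ℕ) (v : V) : 1 ≤ G.mu18 n v := by
  induction n generalizing v with
  | zero => exact le_refl _
  | succ n ih =>
      rw [mu18_succ]
      by_cases hv : G.IsSink v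
      · rw [if_pos hv]
      · rw [if_neg hv]
        rw [DGraph.IsSink] at hv
        push_neg at hv
        obtain ⟨e, he⟩ := hv
        have hmem : e ∈ (G.rf18 (G.s e)).toFinset := by simp [Set.Finite.mem_toFinset]
        rw [← he]
        calc 1 ≤ G.mu18 n (G.r e) := ih _
          _ ≤ _ := Finset.single_le_sum (f := fun e' => G.mu18 n (G.r e'))
              (fun i _ => Nat.zero_le _) hmem

lemma SA18 : ∀ (n : ℕ) (v : V),
    (∀ (l : List Ed) (u : V), G.WkL l v u → l.length = n →
      ∀ e e', G.s e = u → G.s e' = u → e = e') →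
    G.mu18 (n+1) v = G.mu18 n v := by
  intro n
  induction n with
  | zero =>
      intro v hyp
      rw [mu18_succ]
      by_cases hv : G.IsSink v
      · rw [if_pos hv]; rfl
      · rw [if_neg hv]
        have hv' := hv
        rw [DGraph.IsSink] at hv'
        push_neg at hv'
        obtain ⟨e0, he0⟩ := hv'
        have huniq := hyp [] v rfl rfl
        have hcard : (G.rf18 v).toFinset = {e0} := by
          ext e
          simp only [Set.Finite.mem_toFinset, Set.mem_setOf_eq, Finset.mem_singleton]
          constructor
          · intro he
            exact huniq e e0 he he0
          · intro he; rw [he]; exact he0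
        rw [hcard, Finset.sum_singleton]
        rfl
  | succ n ih =>
      intro v hyp
      rw [mu18_succ, mu18_succ]
      by_cases hv : G.IsSink v
      · rw [if_pos hv, if_pos hv]
      · rw [if_neg hv, if_neg hv]
        apply Finset.sum_congr rfl
        intro e hmem
        have hse : G.s e = v := by
          simpa [Set.Finite.mem_toFinset] using hmem
        apply ih (G.r e)
        intro l u hwk hlen e1 e2 he1 he2
        exact hyp (e :: l) u ⟨hse, hwk⟩ (by simp [hlen]) e1 e2 he1 he2

lemma mu_harm (hnc : ¬ ∃ c : G.GPath, c.IsCycle ∧ c.HasExit) (v : V) :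
    G.mu18 (Fintype.card V + 1) v = G.mu18 (Fintype.card V) v := by
  apply G.SA18 (Fintype.card V) v
  intro l u hwk hlen e e' he he'
  have hOn := G.star18 hnc hwk (le_of_eq hlen.symm)
  have h1 := (G.ext1 hnc hOn e he).1
  exact (h1 e' he').symm

lemma mu_eq (hnc : ¬ ∃ c : G.GPath, c.IsCycle ∧ c.HasExit) {v : V} (hv : ¬ G.IsSink v) :
    G.mu18 (Fintype.card V) v
      = ∑ e ∈ (G.rf18 v).toFinset, G.mu18 (Fintype.card V) (G.r e) := by
  conv_lhs => rw [← G.mu_harm hnc v]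
  rw [mu18_succ, if_neg hv]

noncomputable def wt18 : ((V × ℤ) →₀ ℕ) →+ ℕ :=
  Finsupp.liftAddHom (fun p => AddMonoidHom.mulLeft (G.mu18 (Fintype.card V) p.1))

lemma wt18_single (p : V × ℤ) (n : ℕ) :
    G.wt18 (Finsupp.single p n) = G.mu18 (Fintype.card V) p.1 * n := by
  simp [wt18, Finsupp.liftAddHom_apply_single]

lemma wt18_apply (x : (V × ℤ) →₀ ℕ) :
    G.wt18 x = x.sum fun p m => G.mu18 (Fintype.card V) p.1 * m := by
  rw [wt18, Finsupp.liftAddHom_apply]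
  rfl

noncomputable def mm (hnc : ¬ ∃ c : G.GPath, c.IsCycle ∧ c.HasExit) :
    G.Tal G.rf18 →+ ℕ :=
  AddCon.lift _ G.wt18 (by
    refine AddCon.addConGen_le.mpr fun a b hab => ?_
    rcases hab with ⟨v, i, hv, rfl, rfl⟩
    refine (AddCon.ker_rel _).mpr ?_
    rw [map_sum, wt18_single, mul_one, G.mu_eq hnc hv]
    apply Finset.sum_congr rfl
    intro e _
    rw [wt18_single, mul_one])

lemma mm_mk (hnc : ¬ ∃ c : G.GPath, c.IsCycle ∧ c.HasExit) (x : (V × ℤ) →₀ ℕ) :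
    G.mm hnc ((x : (G.talCon G.rf18).Quotient)) = G.wt18 x := by
  rw [mm]
  erw [AddCon.lift_coe]

lemma mm_gen (hnc : ¬ ∃ c : G.GPath, c.IsCycle ∧ c.HasExit) (v : V) (i : ℤ) :
    G.mm hnc (G.gen G.rf18 v i) = G.mu18 (Fintype.card V) v := by
  show G.mm hnc (((Finsupp.single (v, i) 1 : (V × ℤ) →₀ ℕ) : (G.talCon G.rf18).Quotient)) = _
  rw [G.mm_mk hnc, wt18_single, mul_one]

lemma mm_shift (hnc : ¬ ∃ c : G.GPath, c.IsCycle ∧ c.HasExit) (n : ℤ)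
    (t : G.Tal G.rf18) : G.mm hnc (G.shift G.rf18 n t) = G.mm hnc t := by
  induction t using AddCon.induction_on with
  | _ a =>
    show G.mm hnc (G.shift G.rf18 n ((a : (G.talCon G.rf18).Quotient))) = _
    rw [shift]
    erw [AddCon.lift_coe]
    show G.mm hnc (((Finsupp.mapDomain (fun p : V × ℤ => (p.1, p.2 + n)) a
      : (V × ℤ) →₀ ℕ) : (G.talCon G.rf18).Quotient)) = _
    rw [G.mm_mk hnc, G.mm_mk hnc, wt18_apply, wt18_apply]
    rw [Finsupp.sum_mapDomain_index (fun p => mul_zero _)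
      (fun p m1 m2 => mul_add _ m1 m2)]

lemma mm_faithful (hnc : ¬ ∃ c : G.GPath, c.IsCycle ∧ c.HasExit)
    (t : G.Tal G.rf18) (h : G.mm hnc t = 0) : t = 0 := by
  induction t using AddCon.induction_on with
  | _ a =>
    rw [G.mm_mk hnc, wt18_apply] at h
    have hz : ∀ p ∈ a.support, G.mu18 (Fintype.card V) p.1 * a p = 0 :=
      Finset.sum_eq_zero_iff.1 h
    have ha : a = 0 := by
      ext p
      by_cases hp : p ∈ a.support
      · have := hz p hp
        have hpos := G.mu18_pos (Fintype.card V) p.1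
        have : a p = 0 := by
          rcases Nat.mul_eq_zero.1 this with h1 | h1
          · omega
          · exact h1
        exact this
      · exact Finsupp.notMem_support_iff.1 hp
    rw [ha]
    rfl

lemma fwd18 (hnc : ¬ ∃ c : G.GPath, c.IsCycle ∧ c.HasExit) :
    ¬ (∃ (n : ℕ), 1 ≤ n ∧
      ∃ (x : Fin n → G.Tal G.rowFinite_of_finite) (α : Fin n → ℤ),
        MLe (∑ u : V, G.gen G.rowFinite_of_finite u 0) (∑ i, x i) ∧
        MLe (∑ i, G.shift G.rowFinite_of_finite (α i) (x i))
            (∑ u : V, G.gen G.rowFinite_of_finite u 0) ∧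
        (∑ i, G.shift G.rowFinite_of_finite (α i) (x i)) ≠
          ∑ u : V, G.gen G.rowFinite_of_finite u 0) := by
  rintro ⟨n, hn, x, α, ⟨c1, hc1⟩, ⟨c2, hc2⟩, hne0⟩
  have hx : (∑ i, G.mm hnc (G.shift G.rowFinite_of_finite (α i) (x i)))
      = ∑ i, G.mm hnc (x i) :=
    Finset.sum_congr rfl (fun i _ => G.mm_shift hnc (α i) (x i))
  have h1 : G.mm hnc (∑ u : V, G.gen G.rowFinite_of_finite u 0) + G.mm hnc c1
      = ∑ i, G.mm hnc (x i) := by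
    rw [← map_sum (G.mm hnc) x Finset.univ, ← map_add]
    exact congrArg (G.mm hnc) hc1
  have h2 : (∑ i, G.mm hnc (x i)) + G.mm hnc c2
      = G.mm hnc (∑ u : V, G.gen G.rowFinite_of_finite u 0) := by
    rw [← hx, ← map_sum (G.mm hnc) _ Finset.univ, ← map_add]
    exact congrArg (G.mm hnc) hc2
  have hc2z : G.mm hnc c2 = 0 := by omega
  have : c2 = 0 := G.mm_faithful hnc c2 hc2z
  rw [this, add_zero] at hc2
  exact hne0 hc2

end DGraph
end Aux18h

/-- For a finite graph `E`, the talented monoid `T_E` is paradoxical iff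
`E` has a cycle with an exit.  Here `T_E` is paradoxical if there are `x₁, …, x_n ∈ T_E`
and `α₁, …, α_n ∈ ℤ` with `Σ xᵢ ≥ [T_E]` while `Σ ^{αᵢ}xᵢ < [T_E]`, where
`[T_E] = Σ_{u ∈ E⁰} u`. -/
theorem statement18 {V Ed : Type} [Fintype V] [Fintype Ed] (G : DGraph V Ed) :
    (∃ (n : ℕ), 1 ≤ n ∧
      ∃ (x : Fin n → G.Tal G.rowFinite_of_finite) (α : Fin n → ℤ),
        MLe (∑ u : V, G.gen G.rowFinite_of_finite u 0) (∑ i, x i) ∧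
        MLe (∑ i, G.shift G.rowFinite_of_finite (α i) (x i))
            (∑ u : V, G.gen G.rowFinite_of_finite u 0) ∧
        (∑ i, G.shift G.rowFinite_of_finite (α i) (x i)) ≠
          ∑ u : V, G.gen G.rowFinite_of_finite u 0) ↔
      ∃ c : G.GPath, c.IsCycle ∧ c.HasExit := by
  constructor
  · intro hp
    by_contra hnc
    exact G.fwd18 hnc hp
  · exact G.rev18
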